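/- arXiv:2211.02802 — 5 statements merged into one kernel-verified Lean document; each statement's English description precedes it below -/
import Mathlib

section
/- Let X, Y span a subspace Γ of matrices of rank at most s, let ∇F satisfy the coercivity ⟨X − Y, ∇F(X) − ∇F(Y)⟩ ≥ 2(1 − δ_s)‖X − Y‖_F² and the projected smoothness ‖P_Γ(∇F(X) − ∇F(Y))‖_F² ≤ 2(1+δ_s)⟨X − Y, ∇F(X) − ∇F(Y)⟩. Then for any step size 0 < η ≤ 1/(1+δ_s): ‖X − Y − η P_Γ(∇F(X) − ∇F(Y))‖_F ≤ √(1 − 2(1 − δ_s)(2η − 2η²(1+δ_s))) · ‖X − Y‖_F. -/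
noncomputable section

open Finset

/-- Frobenius inner product on real matrices. -/
def finner {n₁ n₂ : ℕ} (X Y : Matrix (Fin n₁) (Fin n₂) ℝ) : ℝ :=
  ∑ i, ∑ j, X i j * Y i j

/-- Frobenius norm on real matrices. -/
def fnorm {n₁ n₂ : ℕ} (X : Matrix (Fin n₁) (Fin n₂) ℝ) : ℝ :=
  Real.sqrt (finner X X)

/-!
Write `D = X - Y` and `W = ∇F(X) - ∇F(Y)`. Expanding the square,
`‖D - η P W‖² = ‖D‖² - 2η⟨D, P W⟩ + η²‖P W‖²`, and `⟨D, P W⟩ = ⟨P D, W⟩ = ⟨D, W⟩` because `P` is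
self-adjoint and fixes `D ∈ Γ`. Projected smoothness bounds `η²‖P W‖²` by `2η²(1 + δ)⟨D, W⟩`,
leaving `‖D‖² - (2η - 2η²(1 + δ))⟨D, W⟩`. The step size `η ≤ 1/(1 + δ)` makes the coefficient
of `⟨D, W⟩` nonnegative, so coercivity finishes the estimate.
-/

open RealInnerProductSpace

section GradientStep

variable {E : Type*} [NormedAddCommGroup E] [InnerProductSpace ℝ E]

theorem norm_sub_smul_le_of_coercive {μ L η : ℝ} {d v : E} (hη : 0 ≤ η) (hηL : η * L ≤ 2)
    (hcoerc : μ * ‖d‖ ^ 2 ≤ ⟪d, v⟫) (hsmooth : ‖v‖ ^ 2 ≤ L * ⟪d, v⟫) :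
    ‖d - η • v‖ ≤ √(1 - μ * (2 * η - η ^ 2 * L)) * ‖d‖ := by
  have hgain : 0 ≤ 2 * η - η ^ 2 * L := by nlinarith
  have hsq : ‖d - η • v‖ ^ 2 ≤ (1 - μ * (2 * η - η ^ 2 * L)) * ‖d‖ ^ 2 := by
    rw [norm_sub_sq_real, inner_smul_right, norm_smul, mul_pow, Real.norm_eq_abs, sq_abs]
    nlinarith [mul_le_mul_of_nonneg_left hsmooth (sq_nonneg η),
      mul_le_mul_of_nonneg_left hcoerc hgain]
  calc ‖d - η • v‖ = √(‖d - η • v‖ ^ 2) := (Real.sqrt_sq (norm_nonneg _)).symm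
    _ ≤ √((1 - μ * (2 * η - η ^ 2 * L)) * ‖d‖ ^ 2) := Real.sqrt_le_sqrt hsq
    _ = √(1 - μ * (2 * η - η ^ 2 * L)) * ‖d‖ := by
      rw [Real.sqrt_mul' _ (sq_nonneg _), Real.sqrt_sq (norm_nonneg _)]

end GradientStep

section Frobenius

variable {n₁ n₂ : ℕ}

theorem finner_eq_inner (X Y : Matrix (Fin n₁) (Fin n₂) ℝ) :
    finner X Y = ⟪WithLp.toLp 2 X.vec, WithLp.toLp 2 Y.vec⟫ := by
  rw [EuclideanSpace.inner_eq_star_dotProduct]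
  simp only [finner, dotProduct, Matrix.vec, Fintype.sum_prod_type, star_trivial]
  rw [Finset.sum_comm]
  simp only [mul_comm]

theorem fnorm_eq_norm (X : Matrix (Fin n₁) (Fin n₂) ℝ) :
    fnorm X = ‖WithLp.toLp 2 X.vec‖ := by
  rw [fnorm, finner_eq_inner, real_inner_self_eq_norm_sq, Real.sqrt_sq (norm_nonneg _)]

theorem fnorm_sub_smul_le_of_coercive {μ L η : ℝ} {D V : Matrix (Fin n₁) (Fin n₂) ℝ}
    (hη : 0 ≤ η) (hηL : η * L ≤ 2) (hcoerc : μ * fnorm D ^ 2 ≤ finner D V)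
    (hsmooth : fnorm V ^ 2 ≤ L * finner D V) :
    fnorm (D - η • V) ≤ √(1 - μ * (2 * η - η ^ 2 * L)) * fnorm D := by
  rw [fnorm_eq_norm, finner_eq_inner] at *
  simpa only [fnorm_eq_norm, Matrix.vec_sub, Matrix.vec_smul, WithLp.toLp_sub, WithLp.toLp_smul]
    using norm_sub_smul_le_of_coercive hη hηL hcoerc hsmooth

end Frobenius

theorem stmt_4_general {n₁ n₂ : ℕ} (δ η : ℝ)
    (hη0 : 0 < η) (hη1 : η ≤ 1 / (1 + δ))
    (Γ : Submodule ℝ (Matrix (Fin n₁) (Fin n₂) ℝ))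
    (X Y : Matrix (Fin n₁) (Fin n₂) ℝ) (hX : X ∈ Γ) (hY : Y ∈ Γ)
    (P : Matrix (Fin n₁) (Fin n₂) ℝ →ₗ[ℝ] Matrix (Fin n₁) (Fin n₂) ℝ)
    (hPid : ∀ Z ∈ Γ, P Z = Z)
    (hPsa : ∀ Z W, finner (P Z) W = finner Z (P W))
    (G : Matrix (Fin n₁) (Fin n₂) ℝ → Matrix (Fin n₁) (Fin n₂) ℝ)
    (hcoerc : finner (X - Y) (G X - G Y) ≥ 2 * (1 - δ) * fnorm (X - Y) ^ 2)
    (hsmooth : fnorm (P (G X - G Y)) ^ 2 ≤ 2 * (1 + δ) * finner (X - Y) (G X - G Y)) :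
    fnorm (X - Y - η • P (G X - G Y)) ≤
      Real.sqrt (1 - 2 * (1 - δ) * (2 * η - 2 * η ^ 2 * (1 + δ))) * fnorm (X - Y) := by
  have hδ : 0 < 1 + δ := one_div_pos.mp (hη0.trans_le hη1)
  have hηL : η * (2 * (1 + δ)) ≤ 2 := by
    rw [le_div_iff₀ hδ] at hη1
    linarith
  have hproj : finner (X - Y) (P (G X - G Y)) = finner (X - Y) (G X - G Y) := by
    rw [← hPsa, hPid _ (Γ.sub_mem hX hY)]
  have key := fnorm_sub_smul_le_of_coercive hη0.le hηL (hproj ▸ hcoerc) (hproj ▸ hsmooth)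
  rwa [show η ^ 2 * (2 * (1 + δ)) = 2 * η ^ 2 * (1 + δ) by ring] at key

theorem stmt_4 {n₁ n₂ s : ℕ} (δ η : ℝ) (hδ0 : 0 ≤ δ) (hδ1 : δ < 1)
    (hη0 : 0 < η) (hη1 : η ≤ 1 / (1 + δ))
    (Γ : Submodule ℝ (Matrix (Fin n₁) (Fin n₂) ℝ))
    (hrank : ∀ Z ∈ Γ, Matrix.rank Z ≤ s)
    (X Y : Matrix (Fin n₁) (Fin n₂) ℝ) (hX : X ∈ Γ) (hY : Y ∈ Γ)
    (P : Matrix (Fin n₁) (Fin n₂) ℝ →ₗ[ℝ] Matrix (Fin n₁) (Fin n₂) ℝ)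
    (hPmem : ∀ Z, P Z ∈ Γ) (hPid : ∀ Z ∈ Γ, P Z = Z)
    (hPsa : ∀ Z W, finner (P Z) W = finner Z (P W))
    (G : Matrix (Fin n₁) (Fin n₂) ℝ → Matrix (Fin n₁) (Fin n₂) ℝ)
    (hcoerc : finner (X - Y) (G X - G Y) ≥ 2 * (1 - δ) * fnorm (X - Y) ^ 2)
    (hsmooth : fnorm (P (G X - G Y)) ^ 2 ≤ 2 * (1 + δ) * finner (X - Y) (G X - G Y)) :
    fnorm (X - Y - η • P (G X - G Y)) ≤
      Real.sqrt (1 - 2 * (1 - δ) * (2 * η - 2 * η ^ 2 * (1 + δ))) * fnorm (X - Y) :=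
  stmt_4_general δ η hη0 hη1 Γ X Y hX hY P hPid hPsa G hcoerc hsmooth
end
end

section
/- With f_i the per-sample quadratic losses and F = (1/m)Σᵢ fᵢ their average, suppose each f_i satisfies, on a subspace Γ containing X, Y of matrices of rank at most s, the bound ‖P_Γ(∇f_i(X) − ∇f_i(Y))‖_F² ≤ 2(1+δ_s)⟨X − Y, ∇f_i(X) − ∇f_i(Y)⟩, and F satisfies ⟨X − Y, ∇F(X) − ∇F(Y)⟩ ≥ 2(1 − δ_s)‖X − Y‖_F². If i is chosen uniformly at random from {1,…,m} and 0 < η ≤ 1/(1+δ_s), then E_i ‖X − Y − η P_Γ(∇f_i(X) − ∇f_i(Y))‖_F ≤ √(1 − 2(1 − δ_s)(2η − 2η²(1+δ_s))) · ‖X − Y‖_F. -/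
/-!
Write `D = X - Y` and `wᵢ = ∇fᵢ(X) - ∇fᵢ(Y)`. Since `D ∈ Γ` and `P_Γ` is self-adjoint,
`⟨D, P_Γ wᵢ⟩ = ⟨D, wᵢ⟩`, so expanding the square and using the per-sample smoothness bound gives
`‖D - η P_Γ wᵢ‖² ≤ ‖D‖² - (2η - 2η²(1+δ)) ⟨D, wᵢ⟩`, with a nonnegative coefficient when
`η(1+δ) ≤ 1`. Averaging over `i` and applying restricted strong convexity of `F` bounds the mean
square by `(1 - 2(1-δ)(2η - 2η²(1+δ))) ‖D‖²`, and Jensen passes from the mean square to the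
mean norm. The Frobenius inner product is the Euclidean one on flattened matrices, so the
argument runs in an arbitrary real inner product space.
-/

noncomputable section

open Finset

open scoped RealInnerProductSpace BigOperators

theorem sq_expect_le_expect_sq {ι : Type*} [Fintype ι] [Nonempty ι] (f : ι → ℝ) :
    (𝔼 i, f i) ^ 2 ≤ 𝔼 i, f i ^ 2 := by
  simpa using expect_mul_sq_le_sq_mul_sq univ f 1

theorem one_div_mul_sum_eq_expect {m : ℕ} (f : Fin m → ℝ) :
    1 / (m : ℝ) * ∑ i, f i = 𝔼 i, f i := by
  rw [expect_eq_sum_div_card, card_univ, Fintype.card_fin, one_div_mul_eq_div]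

section InnerProductSpace

variable {E : Type*} [NormedAddCommGroup E] [InnerProductSpace ℝ E]

theorem norm_sub_smul_sq_le_of_inner_eq {D w p : E} {η L : ℝ} (hp : ⟪D, p⟫ = ⟪D, w⟫)
    (hsmooth : ‖p‖ ^ 2 ≤ 2 * L * ⟪D, w⟫) :
    ‖D - η • p‖ ^ 2 ≤ ‖D‖ ^ 2 - (2 * η - 2 * η ^ 2 * L) * ⟪D, w⟫ := by
  rw [norm_sub_sq_real, inner_smul_right, norm_smul, mul_pow, Real.norm_eq_abs, sq_abs, hp]
  nlinarith [mul_le_mul_of_nonneg_left hsmooth (sq_nonneg η)]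

theorem expect_norm_sub_smul_le {ι : Type*} [Fintype ι] [Nonempty ι] (D : E) (w p : ι → E)
    {η L μ : ℝ} (hη : 0 ≤ η) (hηL : η * L ≤ 1) (hp : ∀ i, ⟪D, p i⟫ = ⟪D, w i⟫)
    (hsmooth : ∀ i, ‖p i‖ ^ 2 ≤ 2 * L * ⟪D, w i⟫) (hcoerc : μ * ‖D‖ ^ 2 ≤ 𝔼 i, ⟪D, w i⟫) :
    𝔼 i, ‖D - η • p i‖ ≤ √(1 - μ * (2 * η - 2 * η ^ 2 * L)) * ‖D‖ := by
  set t := 2 * η - 2 * η ^ 2 * L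
  have ht : 0 ≤ t := by nlinarith
  have hmean_sq : 𝔼 i, ‖D - η • p i‖ ^ 2 ≤ (1 - μ * t) * ‖D‖ ^ 2 :=
    calc 𝔼 i, ‖D - η • p i‖ ^ 2 ≤ 𝔼 i, (‖D‖ ^ 2 - t * ⟪D, w i⟫) :=
          expect_le_expect fun i _ ↦ norm_sub_smul_sq_le_of_inner_eq (hp i) (hsmooth i)
      _ = ‖D‖ ^ 2 - t * 𝔼 i, ⟪D, w i⟫ := by
          rw [expect_sub_distrib, Fintype.expect_const, mul_expect]
      _ ≤ (1 - μ * t) * ‖D‖ ^ 2 := by nlinarith [mul_le_mul_of_nonneg_left hcoerc ht]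
  rw [← Real.sqrt_sq (norm_nonneg D), ← Real.sqrt_mul' _ (sq_nonneg _)]
  exact Real.le_sqrt_of_sq_le ((sq_expect_le_expect_sq _).trans hmean_sq)

end InnerProductSpace

namespace Matrix

variable {n₁ n₂ : ℕ}

def frobeniusVec : Matrix (Fin n₁) (Fin n₂) ℝ →ₗ[ℝ] EuclideanSpace ℝ (Fin n₁ × Fin n₂) where
  toFun X := WithLp.toLp 2 fun p ↦ X p.1 p.2
  map_add' _ _ := rfl
  map_smul' _ _ := rfl

@[simp]
theorem frobeniusVec_apply (X : Matrix (Fin n₁) (Fin n₂) ℝ) (p : Fin n₁ × Fin n₂) :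
    frobeniusVec X p = X p.1 p.2 :=
  rfl

theorem inner_frobeniusVec (X Y : Matrix (Fin n₁) (Fin n₂) ℝ) :
    ⟪frobeniusVec X, frobeniusVec Y⟫ = finner X Y := by
  simp [PiLp.inner_apply, Fintype.sum_prod_type, finner, mul_comm]

theorem norm_frobeniusVec (X : Matrix (Fin n₁) (Fin n₂) ℝ) : ‖frobeniusVec X‖ = fnorm X := by
  rw [fnorm, ← inner_frobeniusVec, real_inner_self_eq_norm_sq, Real.sqrt_sq (norm_nonneg _)]

end Matrix

open Matrix in
theorem stmt_5_general {n₁ n₂ m : ℕ} (hm : 0 < m) (δ η : ℝ)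
    (hη0 : 0 < η) (hη1 : η ≤ 1 / (1 + δ))
    (Γ : Submodule ℝ (Matrix (Fin n₁) (Fin n₂) ℝ))
    (X Y : Matrix (Fin n₁) (Fin n₂) ℝ) (hX : X ∈ Γ) (hY : Y ∈ Γ)
    (P : Matrix (Fin n₁) (Fin n₂) ℝ →ₗ[ℝ] Matrix (Fin n₁) (Fin n₂) ℝ)
    (hPid : ∀ Z ∈ Γ, P Z = Z)
    (hPsa : ∀ Z W, finner (P Z) W = finner Z (P W))
    (g : Fin m → Matrix (Fin n₁) (Fin n₂) ℝ → Matrix (Fin n₁) (Fin n₂) ℝ)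
    (G : Matrix (Fin n₁) (Fin n₂) ℝ → Matrix (Fin n₁) (Fin n₂) ℝ)
    (hG : ∀ Z, G Z = (1 / (m : ℝ)) • ∑ i, g i Z)
    (hsmooth : ∀ i, fnorm (P (g i X - g i Y)) ^ 2 ≤
      2 * (1 + δ) * finner (X - Y) (g i X - g i Y))
    (hcoerc : finner (X - Y) (G X - G Y) ≥ 2 * (1 - δ) * fnorm (X - Y) ^ 2) :
    (1 / (m : ℝ)) * ∑ i, fnorm (X - Y - η • P (g i X - g i Y)) ≤
      Real.sqrt (1 - 2 * (1 - δ) * (2 * η - 2 * η ^ 2 * (1 + δ))) * fnorm (X - Y) := by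
  have : Nonempty (Fin m) := Fin.pos_iff_nonempty.mp hm
  have hδ : 0 < 1 + δ := one_div_pos.mp (hη0.trans_le hη1)
  have hηL : η * (1 + δ) ≤ 1 := (le_div_iff₀ hδ).mp hη1
  have hPXY : P (X - Y) = X - Y := hPid _ (Γ.sub_mem hX hY)
  have hproj i : finner (X - Y) (P (g i X - g i Y)) = finner (X - Y) (g i X - g i Y) := by
    rw [← hPsa, hPXY]
  rw [hG, hG, ← smul_sub, ← sum_sub_distrib] at hcoerc
  simp only [← norm_frobeniusVec, ← inner_frobeniusVec, map_sub frobeniusVec (X - Y), map_smul,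
    map_sum, inner_smul_right, inner_sum, one_div_mul_sum_eq_expect] at hcoerc hsmooth hproj ⊢
  exact expect_norm_sub_smul_le _ _ _ hη0.le hηL hproj hsmooth hcoerc

theorem stmt_5 {n₁ n₂ m s : ℕ} (hm : 0 < m) (δ η : ℝ) (hδ0 : 0 ≤ δ) (hδ1 : δ < 1)
    (hη0 : 0 < η) (hη1 : η ≤ 1 / (1 + δ))
    (Γ : Submodule ℝ (Matrix (Fin n₁) (Fin n₂) ℝ))
    (hrank : ∀ Z ∈ Γ, Matrix.rank Z ≤ s)
    (X Y : Matrix (Fin n₁) (Fin n₂) ℝ) (hX : X ∈ Γ) (hY : Y ∈ Γ)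
    (P : Matrix (Fin n₁) (Fin n₂) ℝ →ₗ[ℝ] Matrix (Fin n₁) (Fin n₂) ℝ)
    (hPmem : ∀ Z, P Z ∈ Γ) (hPid : ∀ Z ∈ Γ, P Z = Z)
    (hPsa : ∀ Z W, finner (P Z) W = finner Z (P W))
    (g : Fin m → Matrix (Fin n₁) (Fin n₂) ℝ → Matrix (Fin n₁) (Fin n₂) ℝ)
    (G : Matrix (Fin n₁) (Fin n₂) ℝ → Matrix (Fin n₁) (Fin n₂) ℝ)
    (hG : ∀ Z, G Z = (1 / (m : ℝ)) • ∑ i, g i Z)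
    (hsmooth : ∀ i, fnorm (P (g i X - g i Y)) ^ 2 ≤
      2 * (1 + δ) * finner (X - Y) (g i X - g i Y))
    (hcoerc : finner (X - Y) (G X - G Y) ≥ 2 * (1 - δ) * fnorm (X - Y) ^ 2) :
    (1 / (m : ℝ)) * ∑ i, fnorm (X - Y - η • P (g i X - g i Y)) ≤
      Real.sqrt (1 - 2 * (1 - δ) * (2 * η - 2 * η ^ 2 * (1 + δ))) * fnorm (X - Y) :=
  stmt_5_general hm δ η hη0 hη1 Γ X Y hX hY P hPid hPsa g G hG hsmooth hcoerc
end
end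

section
/- Let X* satisfy ∇F(X*) = 0 and let Λ be a subspace containing X and X* such that ⟨X − X*, ∇F(X) − ∇F(X*)⟩ ≥ 2(1 − δ_τ)‖X − X*‖_F² and ⟨∇F(X) − ∇F(X*), X − X*⟩ ≤ 2(1+δ_τ)‖X − X*‖_F², and F(X) ≤ F(X*) + (1+δ_τ)‖X − X*‖_F². Then ‖P_Λ(∇F(X))‖_F² ≥ (4(1 − δ_τ)²/(1+δ_τ)) (F(X) − F(X*)). -/
/-!
Since `X - X⋆ ∈ Λ` and `P_Λ` is self-adjoint, `∇F(X)` and `P_Λ ∇F(X)` have the same inner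
product with `X - X⋆`. Coercivity and Cauchy–Schwarz therefore give
`‖P_Λ ∇F(X)‖ ≥ 2(1 - δ)‖X - X⋆‖`, and squaring and comparing with the upper bound
`F(X) - F(X⋆) ≤ (1 + δ)‖X - X⋆‖²` yields the gradient-dominance inequality.
-/

noncomputable section

open Finset

section Frobenius

variable {n₁ n₂ : ℕ}

lemma finner_eq_sum_prod (X Y : Matrix (Fin n₁) (Fin n₂) ℝ) :
    finner X Y = ∑ p : Fin n₁ × Fin n₂, X p.1 p.2 * Y p.1 p.2 := by
  rw [finner, Fintype.sum_prod_type]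

lemma finner_self_nonneg (X : Matrix (Fin n₁) (Fin n₂) ℝ) : 0 ≤ finner X X :=
  sum_nonneg fun _ _ => sum_nonneg fun _ _ => mul_self_nonneg _

lemma fnorm_nonneg (X : Matrix (Fin n₁) (Fin n₂) ℝ) : 0 ≤ fnorm X :=
  Real.sqrt_nonneg _

lemma finner_sq_le_finner_mul_finner (X Y : Matrix (Fin n₁) (Fin n₂) ℝ) :
    finner X Y ^ 2 ≤ finner X X * finner Y Y := by
  simp only [finner_eq_sum_prod, ← sq]
  exact sum_mul_sq_le_sq_mul_sq _ _ _

lemma finner_le_fnorm_mul_fnorm (X Y : Matrix (Fin n₁) (Fin n₂) ℝ) :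
    finner X Y ≤ fnorm X * fnorm Y := by
  rw [fnorm, fnorm, ← Real.sqrt_mul (finner_self_nonneg X)]
  exact (le_abs_self _).trans (Real.abs_le_sqrt (finner_sq_le_finner_mul_finner X Y))

lemma mul_fnorm_le_fnorm_of_mul_fnorm_sq_le_finner {μ : ℝ} {D Y : Matrix (Fin n₁) (Fin n₂) ℝ}
    (h : μ * fnorm D ^ 2 ≤ finner D Y) : μ * fnorm D ≤ fnorm Y := by
  rcases (fnorm_nonneg D).eq_or_lt with hD | hD
  · rw [← hD, mul_zero]
    exact fnorm_nonneg Y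
  · have : fnorm D * (μ * fnorm D) ≤ fnorm D * fnorm Y := by
      nlinarith [finner_le_fnorm_mul_fnorm D Y]
    exact le_of_mul_le_mul_left this hD

lemma finner_map_right_of_map_eq_self
    {P : Matrix (Fin n₁) (Fin n₂) ℝ → Matrix (Fin n₁) (Fin n₂) ℝ}
    (hP : ∀ Z W, finner (P Z) W = finner Z (P W)) {Z : Matrix (Fin n₁) (Fin n₂) ℝ}
    (hZ : P Z = Z) (W : Matrix (Fin n₁) (Fin n₂) ℝ) :
    finner Z (P W) = finner Z W := by
  rw [← hP, hZ]

end Frobenius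

theorem stmt_7_general {n₁ n₂ : ℕ} (δ : ℝ) (hδ0 : 0 ≤ δ) (hδ1 : δ < 1)
    (Λ : Submodule ℝ (Matrix (Fin n₁) (Fin n₂) ℝ))
    (X Xstar : Matrix (Fin n₁) (Fin n₂) ℝ) (hX : X ∈ Λ) (hXstar : Xstar ∈ Λ)
    (P : Matrix (Fin n₁) (Fin n₂) ℝ →ₗ[ℝ] Matrix (Fin n₁) (Fin n₂) ℝ)
    (hPid : ∀ Z ∈ Λ, P Z = Z)
    (hPsa : ∀ Z W, finner (P Z) W = finner Z (P W))
    (F : Matrix (Fin n₁) (Fin n₂) ℝ → ℝ)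
    (G : Matrix (Fin n₁) (Fin n₂) ℝ → Matrix (Fin n₁) (Fin n₂) ℝ)
    (hcrit : G Xstar = 0)
    (hcoerc : finner (X - Xstar) (G X - G Xstar) ≥
      2 * (1 - δ) * fnorm (X - Xstar) ^ 2)
    (hupper : F X ≤ F Xstar + (1 + δ) * fnorm (X - Xstar) ^ 2) :
    fnorm (P (G X)) ^ 2 ≥ (4 * (1 - δ) ^ 2 / (1 + δ)) * (F X - F Xstar) := by
  have hfix : P (X - Xstar) = X - Xstar := hPid _ (Λ.sub_mem hX hXstar)
  have hcoerc_proj : 2 * (1 - δ) * fnorm (X - Xstar) ^ 2 ≤ finner (X - Xstar) (P (G X)) := by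
    rw [finner_map_right_of_map_eq_self hPsa hfix]
    simpa [hcrit] using hcoerc
  have hgrad : (2 * (1 - δ) * fnorm (X - Xstar)) ^ 2 ≤ fnorm (P (G X)) ^ 2 :=
    pow_le_pow_left₀ (mul_nonneg (by linarith) (fnorm_nonneg _))
      (mul_fnorm_le_fnorm_of_mul_fnorm_sq_le_finner hcoerc_proj) 2
  have hδpos : 0 < 1 + δ := by linarith
  calc (4 * (1 - δ) ^ 2 / (1 + δ)) * (F X - F Xstar)
      ≤ (4 * (1 - δ) ^ 2 / (1 + δ)) * ((1 + δ) * fnorm (X - Xstar) ^ 2) :=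
        mul_le_mul_of_nonneg_left (by linarith) (by positivity)
    _ = (2 * (1 - δ) * fnorm (X - Xstar)) ^ 2 := by field_simp; ring
    _ ≤ fnorm (P (G X)) ^ 2 := hgrad

theorem stmt_7 {n₁ n₂ τ : ℕ} (δ : ℝ) (hδ0 : 0 ≤ δ) (hδ1 : δ < 1)
    (Λ : Submodule ℝ (Matrix (Fin n₁) (Fin n₂) ℝ))
    (hrank : ∀ Z ∈ Λ, Matrix.rank Z ≤ τ)
    (X Xstar : Matrix (Fin n₁) (Fin n₂) ℝ) (hX : X ∈ Λ) (hXstar : Xstar ∈ Λ)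
    (P : Matrix (Fin n₁) (Fin n₂) ℝ →ₗ[ℝ] Matrix (Fin n₁) (Fin n₂) ℝ)
    (hPmem : ∀ Z, P Z ∈ Λ) (hPid : ∀ Z ∈ Λ, P Z = Z)
    (hPsa : ∀ Z W, finner (P Z) W = finner Z (P W))
    (F : Matrix (Fin n₁) (Fin n₂) ℝ → ℝ)
    (G : Matrix (Fin n₁) (Fin n₂) ℝ → Matrix (Fin n₁) (Fin n₂) ℝ)
    (hcrit : G Xstar = 0)
    (hcoerc : finner (X - Xstar) (G X - G Xstar) ≥
      2 * (1 - δ) * fnorm (X - Xstar) ^ 2)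
    (hsmooth : finner (G X - G Xstar) (X - Xstar) ≤
      2 * (1 + δ) * fnorm (X - Xstar) ^ 2)
    (hupper : F X ≤ F Xstar + (1 + δ) * fnorm (X - Xstar) ^ 2) :
    fnorm (P (G X)) ^ 2 ≥ (4 * (1 - δ) ^ 2 / (1 + δ)) * (F X - F Xstar) :=
  stmt_7_general δ hδ0 hδ1 Λ X Xstar hX hXstar P hPid hPsa F G hcrit hcoerc hupper
end
end

section
/- Let V = ∇f_i(X) − ∇f_i(X̃) + ∇F(X̃) with i uniform on {1,…,m}, and let Ω be a subspace containing X, X̃, X*, with ∇F(X*) = 0. Assume E_i‖P_Ω(∇f_i(Z) − ∇f_i(X*))‖_F² ≤ 4(1+δ)(F(Z) − F(X*)) for Z ∈ {X, X̃} and ‖P_Ω(∇F(X̃))‖_F² ≥ (4(1−δ)²/(1+δ))(F(X̃) − F(X*)). Then E_i‖P_Ω(V)‖_F² ≤ 8(1+δ)(F(X) − F(X*)) + (32δ/(1+δ))(F(X̃) − F(X*)). -/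
/-! Write `P Vᵢ = uᵢ + (w̄ - wᵢ)` with `uᵢ = P (∇fᵢ X - ∇fᵢ X*)`, `wᵢ = P (∇fᵢ X̃ - ∇fᵢ X*)`;
since `∇F X* = 0`, their mean `w̄` is `P (∇F X̃)`. The bound `‖a + b‖² ≤ 2‖a‖² + 2‖b‖²` and the
variance identity `E‖w̄ - wᵢ‖² = E‖wᵢ‖² - ‖w̄‖²` give
`E‖P V‖² ≤ 2 E‖uᵢ‖² + 2 E‖wᵢ‖² - 2 ‖P (∇F X̃)‖²`, into which the three hypotheses are substituted.
The Frobenius norm is the Euclidean norm of the entries, so all of this happens in an arbitrary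
real inner product space. -/

noncomputable section

open Finset

open Fintype RealInnerProductSpace

lemma norm_add_sq_le_two_mul {G : Type*} [SeminormedAddCommGroup G] (a b : G) :
    ‖a + b‖ ^ 2 ≤ 2 * ‖a‖ ^ 2 + 2 * ‖b‖ ^ 2 :=
  calc ‖a + b‖ ^ 2 ≤ (‖a‖ + ‖b‖) ^ 2 := by gcongr; exact norm_add_le a b
    _ ≤ 2 * ‖a‖ ^ 2 + 2 * ‖b‖ ^ 2 := by linarith [add_sq_le (a := ‖a‖) (b := ‖b‖)]

section AverageNormSq

variable {E ι : Type*} [NormedAddCommGroup E] [InnerProductSpace ℝ E] [Fintype ι]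

lemma average_norm_sq_average_sub (w : ι → E) :
    (card ι : ℝ)⁻¹ * ∑ i, ‖(card ι : ℝ)⁻¹ • ∑ j, w j - w i‖ ^ 2 =
      (card ι : ℝ)⁻¹ * ∑ i, ‖w i‖ ^ 2 - ‖(card ι : ℝ)⁻¹ • ∑ j, w j‖ ^ 2 := by
  set c : ℝ := card ι
  set S := ∑ j, w j
  have hcross : ∑ i, ⟪c⁻¹ • S, w i⟫ = c⁻¹ * ‖S‖ ^ 2 := by
    rw [← inner_sum, real_inner_smul_left, real_inner_self_eq_norm_sq]
  simp_rw [norm_sub_sq_real]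
  rw [sum_add_distrib, sum_sub_distrib, ← mul_sum, hcross, sum_const, card_univ, nsmul_eq_mul,
    norm_smul, mul_pow, Real.norm_eq_abs, sq_abs]
  rcases eq_or_ne c 0 with hc | hc
  · simp [hc]
  · field_simp
    ring

lemma average_norm_sq_add_average_sub_le (u w : ι → E) :
    (card ι : ℝ)⁻¹ * ∑ i, ‖u i + ((card ι : ℝ)⁻¹ • ∑ j, w j - w i)‖ ^ 2 ≤
      2 * ((card ι : ℝ)⁻¹ * ∑ i, ‖u i‖ ^ 2) + 2 * ((card ι : ℝ)⁻¹ * ∑ i, ‖w i‖ ^ 2) -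
        2 * ‖(card ι : ℝ)⁻¹ • ∑ j, w j‖ ^ 2 := by
  have hsum := sum_le_sum fun i (_ : i ∈ univ) =>
    norm_add_sq_le_two_mul (u i) ((card ι : ℝ)⁻¹ • ∑ j, w j - w i)
  rw [sum_add_distrib, ← mul_sum, ← mul_sum] at hsum
  have hc : (0 : ℝ) ≤ (card ι : ℝ)⁻¹ := by positivity
  linarith [mul_le_mul_of_nonneg_left hsum hc, average_norm_sq_average_sub w]

lemma average_norm_sq_svrg_le {M : Type*} [AddCommGroup M] [Module ℝ M] (T : M →ₗ[ℝ] E)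
    (g : ι → M → M) (X Xtil Xstar : M) (hcrit : ∑ i, g i Xstar = 0) :
    (card ι : ℝ)⁻¹ * ∑ i, ‖T (g i X - g i Xtil + (card ι : ℝ)⁻¹ • ∑ j, g j Xtil)‖ ^ 2 ≤
      2 * ((card ι : ℝ)⁻¹ * ∑ i, ‖T (g i X - g i Xstar)‖ ^ 2) +
        2 * ((card ι : ℝ)⁻¹ * ∑ i, ‖T (g i Xtil - g i Xstar)‖ ^ 2) -
        2 * ‖T ((card ι : ℝ)⁻¹ • ∑ j, g j Xtil)‖ ^ 2 := by
  have hmean : T ((card ι : ℝ)⁻¹ • ∑ j, g j Xtil) =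
      (card ι : ℝ)⁻¹ • ∑ j, T (g j Xtil - g j Xstar) := by
    rw [← map_sum, sum_sub_distrib, hcrit, sub_zero, map_smul]
  have hsplit : ∀ i, T (g i X - g i Xtil + (card ι : ℝ)⁻¹ • ∑ j, g j Xtil) =
      T (g i X - g i Xstar) + ((card ι : ℝ)⁻¹ • ∑ j, T (g j Xtil - g j Xstar) -
        T (g i Xtil - g i Xstar)) := by
    intro i
    rw [map_add, hmean, map_sub, map_sub, map_sub]
    abel
  simp only [hsplit, hmean]
  exact average_norm_sq_add_average_sub_le _ _

end AverageNormSq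

-- At `δ = -1` both sides are `0`, by the convention `x / 0 = 0`.
lemma four_mul_one_add_sub_div_one_add (δ : ℝ) :
    4 * (1 + δ) - 4 * (1 - δ) ^ 2 / (1 + δ) = 16 * δ / (1 + δ) := by
  rcases eq_or_ne (1 + δ) 0 with h | h
  · have : δ = -1 := by linarith
    subst this; norm_num
  · field_simp
    ring

def Matrix.toEuclideanVec {m n : Type*} : Matrix m n ℝ →ₗ[ℝ] EuclideanSpace ℝ (n × m) where
  toFun A := WithLp.toLp 2 A.vec
  map_add' _ _ := rfl
  map_smul' _ _ := rfl

lemma Matrix.toEuclideanVec_apply {m n : Type*} (A : Matrix m n ℝ) (p : n × m) :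
    A.toEuclideanVec p = A p.2 p.1 :=
  rfl

lemma fnorm_eq_norm_toEuclideanVec {n₁ n₂ : ℕ} (A : Matrix (Fin n₁) (Fin n₂) ℝ) :
    fnorm A = ‖A.toEuclideanVec‖ := by
  rw [fnorm, EuclideanSpace.norm_eq, finner, Fintype.sum_prod_type_right]
  simp only [Matrix.toEuclideanVec_apply, Real.norm_eq_abs, sq, abs_mul_abs_self]

theorem stmt_9_general {n₁ n₂ m : ℕ} (hm : 0 < m) (δ : ℝ)
    (g : Fin m → Matrix (Fin n₁) (Fin n₂) ℝ → Matrix (Fin n₁) (Fin n₂) ℝ)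
    (GF : Matrix (Fin n₁) (Fin n₂) ℝ → Matrix (Fin n₁) (Fin n₂) ℝ)
    (hGF : ∀ Z, GF Z = (1 / (m : ℝ)) • ∑ i, g i Z)
    (F : Matrix (Fin n₁) (Fin n₂) ℝ → ℝ)
    (X Xtil Xstar : Matrix (Fin n₁) (Fin n₂) ℝ)
    (P : Matrix (Fin n₁) (Fin n₂) ℝ →ₗ[ℝ] Matrix (Fin n₁) (Fin n₂) ℝ)
    (hcrit : GF Xstar = 0)
    (hbound : ∀ Z ∈ ({X, Xtil} : Set (Matrix (Fin n₁) (Fin n₂) ℝ)),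
      (1 / (m : ℝ)) * ∑ i, fnorm (P (g i Z - g i Xstar)) ^ 2 ≤
        4 * (1 + δ) * (F Z - F Xstar))
    (hlow : fnorm (P (GF Xtil)) ^ 2 ≥
      (4 * (1 - δ) ^ 2 / (1 + δ)) * (F Xtil - F Xstar))
    (V : Fin m → Matrix (Fin n₁) (Fin n₂) ℝ)
    (hV : ∀ i, V i = g i X - g i Xtil + GF Xtil) :
    (1 / (m : ℝ)) * ∑ i, fnorm (P (V i)) ^ 2 ≤
      8 * (1 + δ) * (F X - F Xstar) +
        (32 * δ / (1 + δ)) * (F Xtil - F Xstar) := by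
  have hsum_crit : ∑ i, g i Xstar = 0 := by
    rw [hGF, smul_eq_zero] at hcrit
    exact hcrit.resolve_left (by positivity)
  have key := average_norm_sq_svrg_le (Matrix.toEuclideanVec ∘ₗ P) g X Xtil Xstar hsum_crit
  simp only [Fintype.card_fin, LinearMap.comp_apply, ← fnorm_eq_norm_toEuclideanVec, ← one_div,
    ← hGF, ← hV] at key
  linear_combination key + 2 * hbound X (by simp) + 2 * hbound Xtil (by simp) + 2 * hlow +
    2 * (F Xtil - F Xstar) * four_mul_one_add_sub_div_one_add δ

theorem stmt_9 {n₁ n₂ m : ℕ} (hm : 0 < m) (δ : ℝ) (hδ0 : 0 ≤ δ) (hδ1 : δ < 1)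
    (g : Fin m → Matrix (Fin n₁) (Fin n₂) ℝ → Matrix (Fin n₁) (Fin n₂) ℝ)
    (GF : Matrix (Fin n₁) (Fin n₂) ℝ → Matrix (Fin n₁) (Fin n₂) ℝ)
    (hGF : ∀ Z, GF Z = (1 / (m : ℝ)) • ∑ i, g i Z)
    (F : Matrix (Fin n₁) (Fin n₂) ℝ → ℝ)
    (X Xtil Xstar : Matrix (Fin n₁) (Fin n₂) ℝ)
    (Ω : Submodule ℝ (Matrix (Fin n₁) (Fin n₂) ℝ))
    (hX : X ∈ Ω) (hXtil : Xtil ∈ Ω) (hXstar : Xstar ∈ Ω)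
    (P : Matrix (Fin n₁) (Fin n₂) ℝ →ₗ[ℝ] Matrix (Fin n₁) (Fin n₂) ℝ)
    (hPmem : ∀ Z, P Z ∈ Ω) (hPid : ∀ Z ∈ Ω, P Z = Z)
    (hPsa : ∀ Z W, finner (P Z) W = finner Z (P W))
    (hcrit : GF Xstar = 0)
    (hbound : ∀ Z ∈ ({X, Xtil} : Set (Matrix (Fin n₁) (Fin n₂) ℝ)),
      (1 / (m : ℝ)) * ∑ i, fnorm (P (g i Z - g i Xstar)) ^ 2 ≤
        4 * (1 + δ) * (F Z - F Xstar))
    (hlow : fnorm (P (GF Xtil)) ^ 2 ≥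
      (4 * (1 - δ) ^ 2 / (1 + δ)) * (F Xtil - F Xstar))
    (V : Fin m → Matrix (Fin n₁) (Fin n₂) ℝ)
    (hV : ∀ i, V i = g i X - g i Xtil + GF Xtil) :
    (1 / (m : ℝ)) * ∑ i, fnorm (P (V i)) ^ 2 ≤
      8 * (1 + δ) * (F X - F Xstar) +
        (32 * δ / (1 + δ)) * (F Xtil - F Xstar) :=
  stmt_9_general hm δ g GF hGF F X Xtil Xstar P hcrit hbound hlow V hV
end
end

section
/- Let 0 ≤ δ < 1/71 and η satisfy (6 − 6δ − √(71δ² − 72δ + 1))/(12 − 12δ²) < η < (6 − 6δ + √(71δ² − 72δ + 1))/(12 − 12δ²). Set ρ = 2√(1 − 2(1 − δ)(2η − 2η²(1+δ))). Then ρ < 1 and for every integer n ≥ 1, κ = (−3ρ^{n+1} + ρⁿ + 2ρ)/(1 − ρ) < 1. -/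
/-!
Write `x = 1 - 2(1-δ)(2η - 2η²(1+δ))`, so that `ρ = 2√x`. The two bounds on `η` are the roots of
`144(1-δ²)η² - 144(1-δ)η + 35`, which equals `36x - 1` up to the positive factor `1 - δ²`;
hence `x < 1/36` and `ρ < 1/3`. Finally `1 - ρ - (-3ρⁿ⁺¹ + ρⁿ + 2ρ) = (1 - 3ρ)(1 - ρⁿ)`,
which is positive for `0 ≤ ρ < 1/3` and `n ≥ 1`.
-/

lemma sq_sub_lt_sq_of_div_lt_of_lt_div {p q s t : ℝ} (hq : 0 < q)
    (h₁ : (p - s) / q < t) (h₂ : t < (p + s) / q) : (q * t - p) ^ 2 < s ^ 2 := by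
  rw [div_lt_iff₀ hq] at h₁
  rw [lt_div_iff₀ hq] at h₂
  exact sq_lt_sq' (by linarith) (by linarith)

lemma radicand_lt_one_div_36 {δ η : ℝ} (hδ : δ ^ 2 < 1)
    (h : ((12 - 12 * δ ^ 2) * η - (6 - 6 * δ)) ^ 2 < 71 * δ ^ 2 - 72 * δ + 1) :
    1 - 2 * (1 - δ) * (2 * η - 2 * η ^ 2 * (1 + δ)) < 1 / 36 := by
  have hfactor : (1 - δ ^ 2) * (36 * (1 - 2 * (1 - δ) * (2 * η - 2 * η ^ 2 * (1 + δ))) - 1)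
      = ((12 - 12 * δ ^ 2) * η - (6 - 6 * δ)) ^ 2 - (71 * δ ^ 2 - 72 * δ + 1) := by ring
  have := neg_of_mul_neg_right (hfactor ▸ sub_neg.mpr h) (by linarith)
  linarith

lemma div_one_sub_lt_one_of_lt_one_div_three {ρ : ℝ} (hρ₀ : 0 ≤ ρ) (hρ : ρ < 1 / 3)
    {n : ℕ} (hn : n ≠ 0) : (-3 * ρ ^ (n + 1) + ρ ^ n + 2 * ρ) / (1 - ρ) < 1 := by
  rw [div_lt_one (by linarith)]
  have hpow : ρ ^ n < 1 := pow_lt_one₀ hρ₀ (by linarith) hn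
  have hfactor : 1 - ρ - (-3 * ρ ^ (n + 1) + ρ ^ n + 2 * ρ) = (1 - 3 * ρ) * (1 - ρ ^ n) := by ring
  rw [← sub_pos, hfactor]
  exact mul_pos (by linarith) (sub_pos.mpr hpow)

theorem stmt_12 (δ η : ℝ) (hδ0 : 0 ≤ δ) (hδ1 : δ < 1 / 71)
    (hηl : (6 - 6 * δ - Real.sqrt (71 * δ ^ 2 - 72 * δ + 1)) / (12 - 12 * δ ^ 2) < η)
    (hηu : η < (6 - 6 * δ + Real.sqrt (71 * δ ^ 2 - 72 * δ + 1)) / (12 - 12 * δ ^ 2))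
    (ρ : ℝ) (hρ : ρ = 2 * Real.sqrt (1 - 2 * (1 - δ) * (2 * η - 2 * η ^ 2 * (1 + δ))))
    (n : ℕ) (hn : 1 ≤ n) :
    ρ < 1 ∧ (-3 * ρ ^ (n + 1) + ρ ^ n + 2 * ρ) / (1 - ρ) < 1 := by
  have hδsq : δ ^ 2 < 1 := by nlinarith
  have hdisc : 0 ≤ 71 * δ ^ 2 - 72 * δ + 1 := by nlinarith
  have hsq := sq_sub_lt_sq_of_div_lt_of_lt_div (by linarith) hηl hηu
  rw [Real.sq_sqrt hdisc] at hsq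
  have hx := radicand_lt_one_div_36 hδsq hsq
  have hρ₃ : ρ < 1 / 3 := by
    have : Real.sqrt (1 - 2 * (1 - δ) * (2 * η - 2 * η ^ 2 * (1 + δ))) < 1 / 6 := by
      rw [Real.sqrt_lt' (by norm_num)]
      linarith
    linarith
  have hρ₀ : 0 ≤ ρ := hρ ▸ by positivity
  exact ⟨by linarith, div_one_sub_lt_one_of_lt_one_div_three hρ₀ hρ₃ (by omega)⟩
end
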